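/- Let F be a field of characteristic p > 0, α ∈ F, β ∈ F^×. The F-algebra A = [α,β)_{p,F} generated by elements i, j with relations i^p - i = α, j^p = β, and j i j^{-1} = i + 1 has dimension p² over F, with F-basis {i^a j^b : 0 ≤ a, b ≤ p-1}. -/

import Mathlib

/-- The defining relations of the cyclic `p`-algebra `[α,β)_{p,F}`:
`i^p - i = α`, `j^p = β`, `j i = (i+1) j`, where `i` and `j` are the images of
the free generators indexed by `false` and `true` respectively. -/
inductive CyclicRel (F : Type) [Field F] (p : ℕ) (α β : F) :
    FreeAlgebra F Bool → FreeAlgebra F Bool → Prop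
  | i : CyclicRel F p α β (FreeAlgebra.ι F false ^ p - FreeAlgebra.ι F false)
      (algebraMap F (FreeAlgebra F Bool) α)
  | j : CyclicRel F p α β (FreeAlgebra.ι F true ^ p)
      (algebraMap F (FreeAlgebra F Bool) β)
  | comm : CyclicRel F p α β (FreeAlgebra.ι F true * FreeAlgebra.ι F false)
      ((FreeAlgebra.ι F false + 1) * FreeAlgebra.ι F true)

/-- The cyclic algebra `[α,β)_{p,F}`, presented by generators and relations. -/
abbrev CyclicAlg (F : Type) [Field F] (p : ℕ) (α β : F) : Type :=
  RingQuot (CyclicRel F p α β)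

/-
The monomials `i^a j^b` with `a, b < p` span `A = [α,β)_{p,F}`: their span contains `1` and is
stable under left multiplication by `i` and by `j`, since `i^p = i + α`, `j^p = β` and
`j i^a = (i + 1)^a j` rewrite every product back into monomials with small exponents.

They are linearly independent because of an explicit representation. Let
`K = F[θ]/(θ^p - θ - α)`; as `(θ + 1)^p = θ^p + 1` in characteristic `p`, there is an
`F`-algebra endomorphism `σ : θ ↦ θ + 1` of `K`, and `σ^p = 1`. Let `M = K[Y]/(Y^p - β)`, with
`σ` extended by `Y ↦ Y`. Letting `i` act on `M` as multiplication by `θ` and `j` as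
`m ↦ Y σ(m)` respects the relations, and then `i^a j^b` sends `1` to `θ^a Y^b`. These are
linearly independent over `F`, as the `θ^a` (`a < p`) form an `F`-basis of `K` and the `Y^b`
(`b < p`) a `K`-basis of `M`.
-/

open Polynomial

theorem Polynomial.monic_X_pow_sub_X_sub_C {R : Type*} [CommRing R] {n : ℕ} (hn : 1 < n)
    (a : R) : (X ^ n - X - C a).Monic := by
  rw [sub_sub]
  exact monic_X_pow_sub (by compute_degree; exact_mod_cast hn)

theorem Polynomial.natDegree_X_pow_sub_X_sub_C {R : Type*} [CommRing R] [Nontrivial R] {n : ℕ}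
    (hn : 1 < n) (a : R) : (X ^ n - X - C a).natDegree = n := by
  rw [sub_sub, natDegree_sub_eq_left_of_natDegree_lt (by simpa using hn), natDegree_X_pow]

namespace AdjoinRoot

variable {R : Type*} [CommRing R]

theorem linearIndependent_root_pow {g : R[X]} (hg : g.Monic) {n : ℕ} (hn : g.natDegree = n) :
    LinearIndependent R fun k : Fin n => root g ^ (k : ℕ) := by
  subst hn
  have := (powerBasis' hg).basis.linearIndependent
  simp only [PowerBasis.coe_basis, powerBasis'_gen] at this
  exact this

theorem root_X_pow_sub_X_sub_C_pow (n : ℕ) (a : R) :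
    root (X ^ n - X - C a) ^ n = root (X ^ n - X - C a) + algebraMap R _ a := by
  have h := eval₂_root (X ^ n - X - C a)
  rw [eval₂_sub, eval₂_sub, eval₂_X_pow, eval₂_X, eval₂_C] at h
  rw [algebraMap_eq]
  linear_combination h

theorem root_X_pow_sub_C_pow (n : ℕ) (a : R) : root (X ^ n - C a) ^ n = algebraMap R _ a := by
  have h := eval₂_root (X ^ n - C a)
  rwa [eval₂_sub, eval₂_X_pow, eval₂_C, sub_eq_zero] at h

end AdjoinRoot

namespace CyclicAlg

variable {F : Type} [Field F] {p : ℕ} {α β : F}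

def i : CyclicAlg F p α β := RingQuot.mkAlgHom F (CyclicRel F p α β) (FreeAlgebra.ι F false)

def j : CyclicAlg F p α β := RingQuot.mkAlgHom F (CyclicRel F p α β) (FreeAlgebra.ι F true)

theorem i_pow_sub_i : (i : CyclicAlg F p α β) ^ p - i = algebraMap F _ α := by
  have h := RingQuot.mkAlgHom_rel F (CyclicRel.i (p := p) (α := α) (β := β))
  rw [map_sub, map_pow, AlgHom.commutes] at h
  exact h

theorem j_pow : (j : CyclicAlg F p α β) ^ p = algebraMap F _ β := by
  have h := RingQuot.mkAlgHom_rel F (CyclicRel.j (p := p) (α := α) (β := β))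
  rw [map_pow, AlgHom.commutes] at h
  exact h

theorem j_mul_i : (j : CyclicAlg F p α β) * i = (i + 1) * j := by
  have h := RingQuot.mkAlgHom_rel F (CyclicRel.comm (p := p) (α := α) (β := β))
  rw [map_mul, map_mul, map_add, map_one] at h
  exact h

section Lift

variable {E : Type*} [Ring E] [Algebra F E] (x y : E) (hx : x ^ p - x = algebraMap F E α)
  (hy : y ^ p = algebraMap F E β) (hxy : y * x = (x + 1) * y)

def lift : CyclicAlg F p α β →ₐ[F] E :=
  RingQuot.liftAlgHom F ⟨FreeAlgebra.lift F fun b => cond b y x, fun _ _ h => by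
    cases h <;> simp [hx, hy, hxy]⟩

@[simp]
theorem lift_i : lift x y hx hy hxy i = x := by
  simp [lift, i]

@[simp]
theorem lift_j : lift x y hx hy hxy j = y := by
  simp [lift, j]

end Lift

section Spanning

variable (F p α β) in
abbrev monomialSpan : Submodule F (CyclicAlg F p α β) :=
  Submodule.span F (Set.range fun x : Fin p × Fin p => i ^ (x.1 : ℕ) * j ^ (x.2 : ℕ))

variable (hp : 1 < p)
include hp

theorem i_pow_mul_j_pow_mem_of_lt (n : ℕ) {m : ℕ} (hm : m < p) :
    i ^ n * j ^ m ∈ monomialSpan F p α β := by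
  induction n using Nat.strong_induction_on with
  | _ n ih =>
    obtain hn | hn := lt_or_ge n p
    · exact Submodule.subset_span ⟨(⟨n, hn⟩, ⟨m, hm⟩), rfl⟩
    obtain ⟨k, rfl⟩ := Nat.exists_eq_add_of_le' hn
    have hi : (i : CyclicAlg F p α β) ^ p = i + algebraMap F _ α := by
      rw [← i_pow_sub_i, add_sub_cancel]
    have : (i : CyclicAlg F p α β) ^ (k + p) * j ^ m =
        i ^ (k + 1) * j ^ m + α • (i ^ k * j ^ m) := by
      rw [pow_add, hi, mul_add, add_mul, pow_succ, Algebra.smul_def, ← Algebra.commutes]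
      simp only [mul_assoc]
    rw [this]
    exact add_mem (ih _ (by omega)) (Submodule.smul_mem _ _ (ih _ (by omega)))

theorem i_pow_mul_j_pow_mem (n m : ℕ) : i ^ n * j ^ m ∈ monomialSpan F p α β := by
  have : (i : CyclicAlg F p α β) ^ n * j ^ m = β ^ (m / p) • (i ^ n * j ^ (m % p)) := by
    conv_lhs => rw [← Nat.div_add_mod m p, pow_add, pow_mul, j_pow, ← map_pow, ← mul_assoc,
      ← Algebra.commutes, mul_assoc, ← Algebra.smul_def]
  rw [this]
  exact Submodule.smul_mem _ _ (i_pow_mul_j_pow_mem_of_lt hp n (Nat.mod_lt m (by omega)))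

theorem i_mul_mem {s : CyclicAlg F p α β} (hs : s ∈ monomialSpan F p α β) :
    i * s ∈ monomialSpan F p α β := by
  induction hs using Submodule.span_induction with
  | mem _ h =>
    obtain ⟨⟨a, b⟩, rfl⟩ := h
    rw [← mul_assoc, ← pow_succ']
    exact i_pow_mul_j_pow_mem hp _ _
  | zero => simp
  | add _ _ _ _ h₁ h₂ => rw [mul_add]; exact add_mem h₁ h₂
  | smul c _ _ h => rw [mul_smul_comm]; exact Submodule.smul_mem _ c h

theorem i_add_one_pow_mul_mem (n : ℕ) {s : CyclicAlg F p α β}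
    (hs : s ∈ monomialSpan F p α β) : (i + 1) ^ n * s ∈ monomialSpan F p α β := by
  induction n with
  | zero => simpa
  | succ n ih =>
    rw [pow_succ', mul_assoc, add_mul, one_mul]
    exact add_mem (i_mul_mem hp ih) ih

theorem j_mul_mem {s : CyclicAlg F p α β} (hs : s ∈ monomialSpan F p α β) :
    j * s ∈ monomialSpan F p α β := by
  induction hs using Submodule.span_induction with
  | mem _ h =>
    obtain ⟨⟨a, b⟩, rfl⟩ := h
    have : (j : CyclicAlg F p α β) * i ^ (a : ℕ) = (i + 1) ^ (a : ℕ) * j :=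
      (SemiconjBy.pow_right j_mul_i _).eq
    rw [← mul_assoc, this, mul_assoc, ← pow_succ']
    exact i_add_one_pow_mul_mem hp _ (by simpa using i_pow_mul_j_pow_mem hp 0 _)
  | zero => simp
  | add _ _ _ _ h₁ h₂ => rw [mul_add]; exact add_mem h₁ h₂
  | smul c _ _ h => rw [mul_smul_comm]; exact Submodule.smul_mem _ c h

theorem mul_mem_monomialSpan (z : CyclicAlg F p α β) {s : CyclicAlg F p α β}
    (hs : s ∈ monomialSpan F p α β) : z * s ∈ monomialSpan F p α β := by
  obtain ⟨x, rfl⟩ := RingQuot.mkAlgHom_surjective F _ z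
  induction x using FreeAlgebra.induction generalizing s with
  | grade0 c => rw [AlgHom.commutes, ← Algebra.smul_def]; exact Submodule.smul_mem _ c hs
  | grade1 b =>
    cases b
    · exact i_mul_mem hp hs
    · exact j_mul_mem hp hs
  | mul a b ha hb => rw [map_mul, mul_assoc]; exact ha (hb hs)
  | add a b ha hb => rw [map_add, add_mul]; exact add_mem (ha hs) (hb hs)

theorem monomialSpan_eq_top : monomialSpan F p α β = ⊤ := by
  refine eq_top_iff.2 fun z _ => ?_
  have hone : (1 : CyclicAlg F p α β) ∈ monomialSpan F p α β := by
    simpa using i_pow_mul_j_pow_mem (α := α) (β := β) hp 0 0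
  simpa using mul_mem_monomialSpan hp z hone

end Spanning

section Model

variable (F p α) in
abbrev ArtinSchreierAlg : Type := AdjoinRoot (X ^ p - X - C α : F[X])

variable (F p α β) in
abbrev Model : Type := AdjoinRoot (X ^ p - C (algebraMap F (ArtinSchreierAlg F p α) β))

local notation "K" => ArtinSchreierAlg F p α
local notation "M" => Model F p α β
local notation "θ" => (AdjoinRoot.root (X ^ p - X - C α) : ArtinSchreierAlg F p α)
local notation "Y" => (AdjoinRoot.root (X ^ p - C (algebraMap F K β)) : Model F p α β)

variable (F p α β) in
noncomputable def opI : Module.End F M :=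
  Algebra.lmul F M (algebraMap K M θ)

theorem opI_apply (m : M) : opI F p α β m = algebraMap K M θ * m := rfl

theorem opI_pow_apply (n : ℕ) (m : M) : (opI F p α β ^ n) m = algebraMap K M (θ ^ n) * m := by
  rw [opI, ← map_pow (Algebra.lmul F M), map_pow (algebraMap K M)]
  rfl

theorem opI_pow_sub_opI : opI F p α β ^ p - opI F p α β = algebraMap F _ α := by
  ext m
  rw [LinearMap.sub_apply, opI_pow_apply, opI_apply, Module.algebraMap_end_apply,
    Algebra.smul_def, AdjoinRoot.root_X_pow_sub_X_sub_C_pow, map_add, add_mul,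
    ← IsScalarTower.algebraMap_apply, add_sub_cancel_left]

variable [Fact p.Prime]

instance : Nontrivial K :=
  AdjoinRoot.nontrivial _ <| by
    rw [degree_eq_natDegree (monic_X_pow_sub_X_sub_C (Fact.out : p.Prime).one_lt α).ne_zero,
      natDegree_X_pow_sub_X_sub_C (Fact.out : p.Prime).one_lt]
    exact_mod_cast (Fact.out : p.Prime).ne_zero

theorem linearIndependent_root_pow_mul_root_pow :
    LinearIndependent F fun x : Fin p × Fin p =>
      algebraMap K M (θ ^ (x.1 : ℕ)) * Y ^ (x.2 : ℕ) := by
  have hp : 1 < p := (Fact.out : p.Prime).one_lt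
  have hθ : LinearIndependent F fun a : Fin p => θ ^ (a : ℕ) :=
    AdjoinRoot.linearIndependent_root_pow (monic_X_pow_sub_X_sub_C hp α)
      (natDegree_X_pow_sub_X_sub_C hp α)
  have hY : LinearIndependent K fun b : Fin p => Y ^ (b : ℕ) :=
    AdjoinRoot.linearIndependent_root_pow (monic_X_pow_sub_C _ (by omega)) natDegree_X_pow_sub_C
  simpa only [Algebra.smul_def] using linearIndependent_smul hθ hY

variable [CharP F p]

instance : CharP K p :=
  charP_of_injective_algebraMap (algebraMap F K).injective p

variable (F p α) in
noncomputable def shift : K →ₐ[F] K :=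
  AdjoinRoot.liftAlgHom _ (Algebra.ofId F K) (θ + 1) <| by
    rw [eval₂_sub, eval₂_sub, eval₂_X_pow, eval₂_X, eval₂_C, add_pow_char, one_pow,
      AdjoinRoot.root_X_pow_sub_X_sub_C_pow, AlgHom.coe_toRingHom, Algebra.ofId_apply]
    ring

theorem shift_root : shift F p α θ = θ + 1 :=
  AdjoinRoot.liftAlgHom_root ..

theorem shift_iterate_root (n : ℕ) : (shift F p α)^[n] θ = θ + n := by
  induction n with
  | zero => rw [Function.iterate_zero_apply, Nat.cast_zero, add_zero]
  | succ n ih =>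
    rw [Function.iterate_succ_apply', ih, map_add, shift_root, map_natCast, Nat.cast_succ]
    ring

variable (F p α β) in
noncomputable def modelShift : M →ₐ[F] M :=
  AdjoinRoot.liftAlgHom _ ((IsScalarTower.toAlgHom F K M).comp (shift F p α)) Y <| by
    rw [eval₂_sub, eval₂_X_pow, eval₂_C, AdjoinRoot.root_X_pow_sub_C_pow, AlgHom.coe_toRingHom,
      AlgHom.comp_apply, AlgHom.commutes, AlgHom.commutes, ← IsScalarTower.algebraMap_apply,
      sub_self]

theorem modelShift_root : modelShift F p α β Y = Y :=
  AdjoinRoot.liftAlgHom_root ..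

theorem modelShift_algebraMap (k : K) :
    modelShift F p α β (algebraMap K M k) = algebraMap K M (shift F p α k) :=
  AdjoinRoot.liftAlgHom_of ..

theorem modelShift_pow : modelShift F p α β ^ p = 1 := by
  refine AdjoinRoot.algHom_ext' (AdjoinRoot.algHom_ext ?_) ?_
  · change (modelShift F p α β ^ p) (algebraMap K M θ) = algebraMap K M θ
    rw [AlgHom.coe_pow,
      ← (Function.Semiconj.iterate_right (fun k => (modelShift_algebraMap k).symm) p).eq,
      shift_iterate_root, CharP.cast_eq_zero, add_zero]
  · change (modelShift F p α β ^ p) Y = Y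
    rw [AlgHom.coe_pow, Function.iterate_fixed modelShift_root]

variable (F p α β) in
noncomputable def opJ : Module.End F M :=
  Algebra.lmul F M Y * (modelShift F p α β).toEnd

theorem opJ_apply (m : M) : opJ F p α β m = Y * modelShift F p α β m := rfl

theorem opJ_pow_apply_one (n : ℕ) : (opJ F p α β ^ n) 1 = Y ^ n := by
  induction n with
  | zero => rw [pow_zero, pow_zero, Module.End.one_apply]
  | succ n ih =>
    rw [pow_succ', Module.End.mul_apply, ih, opJ_apply, map_pow (modelShift F p α β),
      modelShift_root, pow_succ']

theorem opJ_pow : opJ F p α β ^ p = algebraMap F _ β := by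
  have hcomm : Commute (Algebra.lmul F M Y) (modelShift F p α β).toEnd :=
    LinearMap.ext fun m => by
      change Y * modelShift F p α β m = modelShift F p α β (Y * m)
      rw [map_mul (modelShift F p α β), modelShift_root]
  have hY : Algebra.lmul F M Y ^ p = algebraMap F (Module.End F M) β := by
    rw [← map_pow (Algebra.lmul F M), AdjoinRoot.root_X_pow_sub_C_pow,
      ← IsScalarTower.algebraMap_apply, AlgHom.commutes]
  have hσ : (modelShift F p α β).toEnd ^ p = 1 := by
    rw [← map_pow AlgHom.toEnd, modelShift_pow, map_one]
  rw [opJ, hcomm.mul_pow, hY, hσ, mul_one]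

theorem opJ_mul_opI : opJ F p α β * opI F p α β = (opI F p α β + 1) * opJ F p α β :=
  LinearMap.ext fun m => by
    rw [Module.End.mul_apply, Module.End.mul_apply, LinearMap.add_apply, Module.End.one_apply,
      opI_apply, opI_apply, opJ_apply, opJ_apply, map_mul (modelShift F p α β),
      modelShift_algebraMap, shift_root, map_add (algebraMap K M), map_one (algebraMap K M)]
    ring

variable (F p α β) in
noncomputable def rep : CyclicAlg F p α β →ₐ[F] Module.End F M :=
  lift _ _ opI_pow_sub_opI opJ_pow opJ_mul_opI

theorem rep_monomial_apply_one (a b : ℕ) :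
    rep F p α β (i ^ a * j ^ b) 1 = algebraMap K M (θ ^ a) * Y ^ b := by
  rw [map_mul (rep F p α β), map_pow (rep F p α β), map_pow (rep F p α β), rep, lift_i, lift_j,
    Module.End.mul_apply, opJ_pow_apply_one, opI_pow_apply]

end Model

theorem linearIndependent_monomials [Fact p.Prime] [CharP F p] :
    LinearIndependent F fun x : Fin p × Fin p =>
      (i : CyclicAlg F p α β) ^ (x.1 : ℕ) * j ^ (x.2 : ℕ) := by
  refine LinearIndependent.of_comp ((LinearMap.applyₗ 1).comp (rep F p α β).toLinearMap) ?_
  convert linearIndependent_root_pow_mul_root_pow (F := F) (p := p) (α := α) (β := β) using 1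
  funext x
  exact rep_monomial_apply_one _ _

end CyclicAlg

theorem cyclicAlg_dim_and_basis_general (F : Type) [Field F] (p : ℕ) [Fact p.Prime]
    [CharP F p] (α β : F) :
    Module.finrank F (CyclicAlg F p α β) = p ^ 2 ∧
    ∃ b : Module.Basis (Fin p × Fin p) F (CyclicAlg F p α β),
      ∀ a c : Fin p, b (a, c) =
        RingQuot.mkAlgHom F (CyclicRel F p α β)
          (FreeAlgebra.ι F false ^ (a : ℕ) * FreeAlgebra.ι F true ^ (c : ℕ)) := by
  have hli := CyclicAlg.linearIndependent_monomials (F := F) (p := p) (α := α) (β := β)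
  have hsp := (CyclicAlg.monomialSpan_eq_top (F := F) (α := α) (β := β)
    (Fact.out : p.Prime).one_lt).ge
  refine ⟨by simp [Module.finrank_eq_card_basis (.mk hli hsp), sq], .mk hli hsp, fun a c => ?_⟩
  rw [Module.Basis.mk_apply, map_mul, map_pow, map_pow]
  rfl

theorem cyclicAlg_dim_and_basis (F : Type) [Field F] (p : ℕ) [Fact p.Prime]
    [CharP F p] (α β : F) (hβ : β ≠ 0) :
    Module.finrank F (CyclicAlg F p α β) = p ^ 2 ∧
    ∃ b : Module.Basis (Fin p × Fin p) F (CyclicAlg F p α β),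
      ∀ a c : Fin p, b (a, c) =
        RingQuot.mkAlgHom F (CyclicRel F p α β)
          (FreeAlgebra.ι F false ^ (a : ℕ) * FreeAlgebra.ι F true ^ (c : ℕ)) :=
  cyclicAlg_dim_and_basis_general F p α β
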